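/- If a group G with finite generating set S contains two elements x, y ∈ S such that xy ∈ S and x, y generate a free monoid of rank 2, then ω(G,S) ≥ ((1+√5)/2)^2 = (3+√5)/2. -/

import Mathlib

open Filter

/-- The word length of `g` with respect to a generating set `S` (using letters from
`S ∪ S⁻¹`). -/
noncomputable def wordLength {G : Type*} [Group G] (S : Set G) (g : G) : ℕ :=
  sInf {n | ∃ l : List G, l.length = n ∧ (∀ x ∈ l, x ∈ S ∨ x⁻¹ ∈ S) ∧ l.prod = g}

/-- The growth function `F_{G,S}(n)`, counting elements of word length at most `n`. -/
noncomputable def growthFunction {G : Type*} [Group G] (S : Set G) (n : ℕ) : ℕ :=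
  Nat.card {g : G | wordLength S g ≤ n}

/-! Put `t = x * y`. Positive words in `x, y, t` in which `x` is never immediately followed by
`y` represent distinct elements of `G`: expanding `t` to `x y` gives a positive word in `x, y`,
from which the original word is recovered by reading every `x y` greedily as `t`, so freeness of
the monoid generated by `x, y` applies. Such a word of length `n` has `S`-length at most `n`.
Their number `a n`, together with the number `b n` of those not beginning with `y`, satisfies
`a (n + 1) = 2 a n + b n` and `b (n + 1) = a n + b n`, a recursion whose dominant eigenvalue is
the root `(3 + √5) / 2` of `c ^ 2 = 3 c - 1`. -/

inductive XYLetter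
  | x
  | y
  | xy
deriving DecidableEq

namespace XYLetter

def toBools : XYLetter → List Bool
  | x => [true]
  | y => [false]
  | xy => [true, false]

def eval {M : Type*} [Mul M] (a b : M) : XYLetter → M
  | x => a
  | y => b
  | xy => a * b

theorem prod_map_flatMap_toBools {M : Type*} [Monoid M] (a b : M) (l : List XYLetter) :
    ((l.flatMap toBools).map fun c => bif c then a else b).prod = (l.map (eval a b)).prod := by
  induction l with
  | nil => rfl
  | cons c l ih => cases c <;> simp [toBools, eval, ih, mul_assoc]

def decode : List Bool → List XYLetter
  | [] => []
  | true :: false :: u => xy :: decode u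
  | true :: u => x :: decode u
  | false :: u => y :: decode u

theorem decode_true_cons_flatMap {l : List XYLetter} (hl : l.head? ≠ some y) :
    decode (true :: l.flatMap toBools) = x :: decode (l.flatMap toBools) := by
  rcases l with _ | ⟨_ | _ | _, l⟩ <;> simp_all [toBools, decode]

def noXYWords : ℕ → Finset (List XYLetter)
  | 0 => {[]}
  | n + 1 => (noXYWords n).image (y :: ·) ∪ (noXYWords n).image (xy :: ·) ∪
      ((noXYWords n).filter (·.head? ≠ some y)).image (x :: ·)

theorem length_of_mem_noXYWords {n : ℕ} {l : List XYLetter} (hl : l ∈ noXYWords n) :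
    l.length = n := by
  induction n generalizing l with
  | zero => simp_all [noXYWords]
  | succ n ih =>
    simp only [noXYWords, Finset.mem_union, Finset.mem_image, Finset.mem_filter] at hl
    rcases hl with (⟨m, hm, rfl⟩ | ⟨m, hm, rfl⟩) | ⟨m, ⟨hm, -⟩, rfl⟩ <;>
      simp [ih hm]

theorem decode_flatMap_of_mem_noXYWords {n : ℕ} {l : List XYLetter} (hl : l ∈ noXYWords n) :
    decode (l.flatMap toBools) = l := by
  induction n generalizing l with
  | zero => simp_all [noXYWords, decode]
  | succ n ih =>
    simp only [noXYWords, Finset.mem_union, Finset.mem_image, Finset.mem_filter] at hl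
    rcases hl with (⟨m, hm, rfl⟩ | ⟨m, hm, rfl⟩) | ⟨m, ⟨hm, hy⟩, rfl⟩
    · simp [toBools, decode, ih hm]
    · simp [toBools, decode, ih hm]
    · simp [toBools, decode_true_cons_flatMap hy, ih hm]

theorem injOn_prod_map_eval {M : Type*} [Monoid M] {a b : M}
    (hfree : ∀ u v : List Bool,
      (u.map fun c => bif c then a else b).prod = (v.map fun c => bif c then a else b).prod →
      u = v) (n : ℕ) :
    Set.InjOn (fun l : List XYLetter => (l.map (eval a b)).prod) (noXYWords n : Set _) := by
  intro l₁ h₁ l₂ h₂ h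
  calc l₁ = decode (l₁.flatMap toBools) := (decode_flatMap_of_mem_noXYWords h₁).symm
    _ = decode (l₂.flatMap toBools) :=
      congrArg decode (hfree _ _ (by simpa only [prod_map_flatMap_toBools] using h))
    _ = l₂ := decode_flatMap_of_mem_noXYWords h₂

theorem card_image_cons {α : Type*} [DecidableEq α] (a : α) (s : Finset (List α)) :
    (s.image (a :: ·)).card = s.card :=
  Finset.card_image_of_injective s List.cons_injective

theorem disjoint_image_cons {α : Type*} [DecidableEq α] {a b : α} (hab : a ≠ b)
    (s t : Finset (List α)) :
    Disjoint (s.image (a :: ·)) (t.image (b :: ·)) := by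
  simp [Finset.disjoint_left, hab.symm]

theorem filter_noXYWords_succ (n : ℕ) :
    (noXYWords (n + 1)).filter (·.head? ≠ some y) =
      (noXYWords n).image (xy :: ·) ∪
        ((noXYWords n).filter (·.head? ≠ some y)).image (x :: ·) := by
  simp [noXYWords, Finset.filter_union, Finset.filter_image]

theorem card_noXYWords_succ (n : ℕ) :
    (noXYWords (n + 1)).card =
      2 * (noXYWords n).card + ((noXYWords n).filter (·.head? ≠ some y)).card := by
  rw [noXYWords, Finset.card_union_of_disjoint, Finset.card_union_of_disjoint, card_image_cons,
    card_image_cons, card_image_cons, two_mul]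
  · exact disjoint_image_cons (by decide) _ _
  · exact Finset.disjoint_union_left.2
      ⟨disjoint_image_cons (by decide) _ _, disjoint_image_cons (by decide) _ _⟩

theorem card_filter_noXYWords_succ (n : ℕ) :
    ((noXYWords (n + 1)).filter (·.head? ≠ some y)).card =
      (noXYWords n).card + ((noXYWords n).filter (·.head? ≠ some y)).card := by
  rw [filter_noXYWords_succ, Finset.card_union_of_disjoint (disjoint_image_cons (by decide) _ _),
    card_image_cons, card_image_cons]

theorem pow_le_card_noXYWords {c : ℝ} (hc : c ^ 2 ≤ 3 * c - 1) (n : ℕ) :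
    c ^ n ≤ (noXYWords n).card := by
  have hc0 : 0 ≤ c := by nlinarith
  -- `(1, c - 2)` is an eigenvector of the recursion for the eigenvalue `c` when `c ^ 2 = 3 c - 1`.
  suffices c ^ n ≤ (noXYWords n).card ∧
      (c - 2) * c ^ n ≤ ((noXYWords n).filter (·.head? ≠ some y)).card from this.1
  induction n with
  | zero => simpa [noXYWords, Finset.filter_singleton] using show c - 2 ≤ 1 by nlinarith
  | succ n ih =>
    obtain ⟨ih_all, ih_filter⟩ := ih
    have hpow : 0 ≤ c ^ n := pow_nonneg hc0 n
    have hstep : (c - 2) * c * c ^ n ≤ (c - 1) * c ^ n :=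
      mul_le_mul_of_nonneg_right (by nlinarith) hpow
    rw [card_noXYWords_succ, card_filter_noXYWords_succ, pow_succ]
    push_cast
    constructor <;> linarith

end XYLetter

section WordLength

variable {G : Type*} [Group G] {S : Set G}

theorem wordLength_list_prod_le {l : List G} (hl : ∀ a ∈ l, a ∈ S) :
    wordLength S l.prod ≤ l.length :=
  Nat.sInf_le ⟨l, rfl, fun a ha => Or.inl (hl a ha), rfl⟩

theorem exists_list_length_eq_wordLength (hgen : Subgroup.closure S = ⊤) (g : G) :
    ∃ l : List G,
      l.length = wordLength S g ∧ (∀ a ∈ l, a ∈ S ∨ a⁻¹ ∈ S) ∧ l.prod = g := by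
  have hg : g ∈ Submonoid.closure (S ∪ S⁻¹) := by
    rw [← Subgroup.closure_toSubmonoid, hgen]
    trivial
  obtain ⟨l, hl, hprod⟩ := Submonoid.exists_list_of_mem_closure hg
  have hne :
      {m | ∃ l : List G, l.length = m ∧ (∀ a ∈ l, a ∈ S ∨ a⁻¹ ∈ S) ∧ l.prod = g}.Nonempty :=
    ⟨l.length, l, rfl, by simpa using hl, hprod⟩
  exact Nat.sInf_mem hne

theorem finite_setOf_wordLength_le (hS : S.Finite) (hgen : Subgroup.closure S = ⊤) (n : ℕ) :
    {g | wordLength S g ≤ n}.Finite := by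
  have := (hS.union hS.inv).to_subtype
  refine ((List.finite_length_le (S ∪ S⁻¹ : Set G) n).image
    fun l => (l.map Subtype.val).prod).subset ?_
  intro g hg
  obtain ⟨l, hlen, hl, rfl⟩ := exists_list_length_eq_wordLength hgen g
  lift l to List ↥(S ∪ S⁻¹) using by simpa using hl
  exact ⟨l, show l.length ≤ n by rwa [← List.length_map Subtype.val, hlen], rfl⟩

theorem card_le_growthFunction (hS : S.Finite) (hgen : Subgroup.closure S = ⊤) {n : ℕ}
    {ι : Type*} {s : Finset ι} {f : ι → G} (hf : Set.InjOn f s)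
    (hlen : ∀ i ∈ s, wordLength S (f i) ≤ n) :
    s.card ≤ growthFunction S n := by
  rw [growthFunction, Nat.card_coe_set_eq, ← Set.ncard_coe_finset]
  exact Set.ncard_le_ncard_of_injOn f hlen hf (finite_setOf_wordLength_le hS hgen n)

end WordLength

theorem le_of_pow_le_of_tendsto_rpow {a : ℕ → ℝ} {c ω : ℝ} (hc : 0 ≤ c)
    (h : ∀ n, c ^ n ≤ a n)
    (ha : Tendsto (fun n : ℕ => a n ^ (1 / (n : ℝ))) atTop (nhds ω)) : c ≤ ω := by
  refine ge_of_tendsto ha (eventually_atTop.2 ⟨1, fun n hn => ?_⟩)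
  calc c = (c ^ n) ^ (1 / (n : ℝ)) := by
        rw [one_div, Real.pow_rpow_inv_natCast hc (by omega)]
    _ ≤ a n ^ (1 / (n : ℝ)) := by gcongr; exact h n

/-- If a group `G` with finite generating set `S` contains `x, y ∈ S` with `x * y ∈ S`
such that `x, y` generate a free monoid of rank `2`, then
`ω(G,S) ≥ ((1+√5)/2)^2 = (3+√5)/2`. -/
theorem growth_rate_ge_golden_sq {G : Type*} [Group G]
    (S : Finset G) (hS : Subgroup.closure (S : Set G) = ⊤)
    (x y : G) (hx : x ∈ S) (hy : y ∈ S) (hxy : x * y ∈ S)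
    (hfree : ∀ u v : List Bool,
      (u.map fun b => bif b then x else y).prod = (v.map fun b => bif b then x else y).prod →
      u = v)
    (ω : ℝ)
    (hω : Tendsto (fun n : ℕ => (growthFunction (S : Set G) n : ℝ) ^ (1 / (n : ℝ)))
      atTop (nhds ω)) :
    (3 + Real.sqrt 5) / 2 ≤ ω := by
  have hroot : ((3 + √5) / 2) ^ 2 ≤ 3 * ((3 + √5) / 2) - 1 := by
    nlinarith [Real.sq_sqrt (show (0 : ℝ) ≤ 5 by norm_num)]
  have hletters : ∀ c, XYLetter.eval x y c ∈ (S : Set G) := by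
    rintro (_ | _ | _) <;> assumption
  refine le_of_pow_le_of_tendsto_rpow (by positivity) (fun n => ?_) hω
  calc ((3 + √5) / 2) ^ n ≤ (XYLetter.noXYWords n).card :=
        XYLetter.pow_le_card_noXYWords hroot n
    _ ≤ growthFunction (S : Set G) n := by
      refine Nat.cast_le.2 (card_le_growthFunction S.finite_toSet hS
        (XYLetter.injOn_prod_map_eval hfree n) fun l hl => ?_)
      calc _ ≤ (l.map (XYLetter.eval x y)).length :=
            wordLength_list_prod_le (by simpa using fun c _ => hletters c)
        _ = n := by simpa using XYLetter.length_of_mem_noXYWords hl
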